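/- arXiv:1902.09433 — 2 statements merged into one kernel-verified Lean document; each statement's English description precedes it below -/
import Mathlib

section
/- Let β > 0 and let f : ℝ³ → ℝ be measurable with ∫_{ℝ³} (1+‖v‖)·|f(v)| dv < ∞. Then the function (v, v₁, n̂) ↦ [(v−v₁)·n̂]₊ · ( M_β(v₁′)·f(v′) − M_β(v₁)·f(v) ) is integrable on ℝ³ × ℝ³ × S² with respect to (Lebesgue) × (Lebesgue) × (surface measure), and its integral vanishes: ∫_{ℝ³}∫_{ℝ³}∫_{S²} [(v−v₁)·n̂]₊ · ( M_β(v₁′)·f(v′) − M_β(v₁)·f(v) ) dσ(n̂) dv₁ dv = 0, i.e. the linear Boltzmann collision operator Q(M_β, f) has zero total mass. -/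
/-!
The gain term is the loss term `[(v−v₁)·n̂]₊ M_β(v₁) f(v)` composed with the collision map
`(v, v₁, n̂) ↦ (v′, v₁′, −n̂)`, because `(v′−v₁′)·(−n̂) = (v−v₁)·n̂`. For fixed `n̂` the map
`(v, v₁) ↦ (v′, v₁′)` is a linear reflection of `ℝ³ × ℝ³`, hence preserves Lebesgue measure, and
`n̂ ↦ −n̂` is an isometry of the sphere; so the collision map preserves the product measure.
The loss term is integrable because `[(v−v₁)·n̂]₊ ≤ (1+‖v‖)(1+‖v₁‖)` and the sphere has finite
area, being a Lipschitz image of a square under spherical coordinates. Hence the integral of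
gain − loss vanishes.
-/

open MeasureTheory Metric Real
open scoped RealInnerProductSpace

noncomputable section

abbrev E3 := EuclideanSpace ℝ (Fin 3)

/-- The Maxwellian density with inverse temperature `β` on `ℝ³`. -/
def Mβ (β : ℝ) (v : E3) : ℝ :=
  (β / (2 * Real.pi)) ^ ((3 : ℝ) / 2) * Real.exp (-(β / 2) * ‖v‖ ^ 2)

/-- The integrand of the linear Boltzmann collision operator paired with the constant `1`:
for `q = (v, v₁, n̂)`, the value `[(v−v₁)·n̂]₊ · (M_β(v₁′) f(v′) − M_β(v₁) f(v))`,
where `v′ = v − ((v−v₁)·n̂) n̂` and `v₁′ = v₁ + ((v−v₁)·n̂) n̂`. -/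
def collKernel (β : ℝ) (f : E3 → ℝ) (q : E3 × E3 × Metric.sphere (0 : E3) 1) : ℝ :=
  max ((inner ℝ (q.1 - q.2.1) ((q.2.2 : E3)) : ℝ)) 0 *
    (Mβ β (q.2.1 + ((inner ℝ (q.1 - q.2.1) ((q.2.2 : E3)) : ℝ)) • (q.2.2 : E3)) *
        f (q.1 - ((inner ℝ (q.1 - q.2.1) ((q.2.2 : E3)) : ℝ)) • (q.2.2 : E3)) -
      Mβ β q.2.1 * f q.1)

theorem MeasureTheory.MeasurePreserving.integrable_and_integral_comp_sub_self {X : Type*}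
    [MeasurableSpace X] {ν : Measure X} {Φ : X → X} (hΦ : MeasurePreserving Φ ν ν) {g : X → ℝ}
    (hg : Integrable g ν) :
    Integrable (fun x => g (Φ x) - g x) ν ∧ ∫ x, g (Φ x) - g x ∂ν = 0 := by
  have hgΦ : Integrable (fun x => g (Φ x)) ν := (hΦ.integrable_comp hg.aestronglyMeasurable).2 hg
  refine ⟨hgΦ.sub hg, ?_⟩
  rw [integral_sub hgΦ hg, sub_eq_zero,
    ← integral_map hΦ.aemeasurable (by rw [hΦ.map_eq]; exact hg.aestronglyMeasurable), hΦ.map_eq]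

theorem LinearMap.measurePreserving_of_involutive {F : Type*} [NormedAddCommGroup F]
    [NormedSpace ℝ F] [FiniteDimensional ℝ F] [MeasurableSpace F] [BorelSpace F]
    (μ : Measure F) [μ.IsAddHaarMeasure] {T : F →ₗ[ℝ] F} (hT : Function.Involutive T) :
    MeasurePreserving T μ μ := by
  have hdet : LinearMap.det T * LinearMap.det T = 1 := by
    rw [← LinearMap.det_comp, show T ∘ₗ T = LinearMap.id from LinearMap.ext hT, LinearMap.det_id]
  refine ⟨T.continuous_of_finiteDimensional.measurable, ?_⟩
  rw [Measure.map_linearMap_addHaar_eq_smul_addHaar μ (left_ne_zero_of_mul_eq_one hdet)]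
  rcases mul_self_eq_one_iff.1 hdet with h | h <;> simp [h]

theorem isometry_neg_sphere {E : Type*} [NormedAddCommGroup E] (r : ℝ) :
    Isometry (Neg.neg : sphere (0 : E) r → sphere (0 : E) r) :=
  Isometry.of_dist_eq fun x y => by simp [Subtype.dist_eq, dist_neg_neg]

theorem measurePreserving_neg_sphere {E : Type*} [NormedAddCommGroup E] [MeasurableSpace E]
    [BorelSpace E] (r d : ℝ) :
    MeasurePreserving (Neg.neg : sphere (0 : E) r → sphere (0 : E) r) μH[d] μH[d] where
  measurable := continuous_neg.measurable
  map_eq := by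
    rw [(isometry_neg_sphere r).map_hausdorffMeasure (Or.inr neg_surjective),
      neg_surjective.range_eq, Measure.restrict_univ]

theorem integrable_one_add_norm_mul_exp_neg_mul_sq_norm {E : Type*} [NormedAddCommGroup E]
    [NormedSpace ℝ E] [Nontrivial E] [FiniteDimensional ℝ E] [MeasurableSpace E] [BorelSpace E]
    (μ : Measure E) [μ.IsAddHaarMeasure] {b : ℝ} (hb : 0 < b) :
    Integrable (fun v : E => (1 + ‖v‖) * exp (-b * ‖v‖ ^ 2)) μ := by
  have hmoment (n : ℕ) : IntegrableOn (fun y : ℝ => y ^ n * exp (-b * y ^ 2)) (Set.Ioi 0) := by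
    simpa [Real.rpow_natCast] using
      integrableOn_rpow_mul_exp_neg_mul_sq hb (s := n) (by linarith [n.cast_nonneg (α := ℝ)])
  rw [integrable_fun_norm_addHaar μ (f := fun y => (1 + y) * exp (-b * y ^ 2))]
  refine ((hmoment (Module.finrank ℝ E - 1)).add (hmoment (Module.finrank ℝ E - 1 + 1))).congr_fun
    (fun y _ => ?_) measurableSet_Ioi
  simp only [Pi.add_apply, smul_eq_mul]
  ring

section Collision

variable {E : Type*} [NormedAddCommGroup E] [InnerProductSpace ℝ E]

def collisionReflection (u : sphere (0 : E) 1) : (E × E) ≃ₗ[ℝ] (E × E) :=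
  Module.reflection (x := ((u : E), -(u : E)))
    (f := innerₗ E (u : E) ∘ₗ (LinearMap.fst ℝ E E - LinearMap.snd ℝ E E))
    (by norm_num [inner_add_right])

theorem collisionReflection_apply (u : sphere (0 : E) 1) (p : E × E) :
    collisionReflection u p =
      (p.1 - ⟪p.1 - p.2, u⟫ • (u : E), p.2 + ⟪p.1 - p.2, u⟫ • (u : E)) := by
  ext <;> simp [collisionReflection, Module.reflection_apply, real_inner_comm, sub_eq_add_neg]

theorem involutive_collisionReflection (u : sphere (0 : E) 1) :
    Function.Involutive (collisionReflection u) :=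
  Module.involutive_reflection _

theorem continuous_collisionReflection :
    Continuous fun x : sphere (0 : E) 1 × (E × E) => collisionReflection x.1 x.2 := by
  simp only [collisionReflection_apply]
  fun_prop

def collisionMap (q : E × E × sphere (0 : E) 1) : E × E × sphere (0 : E) 1 :=
  let p := collisionReflection q.2.2 (q.1, q.2.1)
  (p.1, p.2, -q.2.2)

def lossTerm (M f : E → ℝ) (q : E × E × sphere (0 : E) 1) : ℝ :=
  max ⟪q.1 - q.2.1, q.2.2⟫ 0 * (M q.2.1 * f q.1)

theorem lossTerm_collisionMap (M f : E → ℝ) (v v₁ : E) (n : sphere (0 : E) 1) :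
    lossTerm M f (collisionMap (v, v₁, n)) =
      max ⟪v - v₁, n⟫ 0 * (M (v₁ + ⟪v - v₁, n⟫ • (n : E)) * f (v - ⟪v - v₁, n⟫ • (n : E))) := by
  have hnn : ⟪(n : E), n⟫ = 1 := by simp
  have hrel : ⟪v - ⟪v - v₁, n⟫ • (n : E) - (v₁ + ⟪v - v₁, n⟫ • (n : E)), -(n : E)⟫ =
      ⟪v - v₁, n⟫ := by
    simp only [inner_neg_right, inner_sub_left, inner_add_left, real_inner_smul_left, hnn]
    ring
  simp only [lossTerm, collisionMap, collisionReflection_apply, coe_neg_sphere, hrel]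

theorem norm_lossTerm_le (M f : E → ℝ) (q : E × E × sphere (0 : E) 1) :
    ‖lossTerm M f q‖ ≤ (1 + ‖q.1‖) * |f q.1| * ((1 + ‖q.2.1‖) * |M q.2.1|) := by
  obtain ⟨v, v₁, n⟩ := q
  have hspeed : max ⟪v - v₁, n⟫ 0 ≤ (1 + ‖v‖) * (1 + ‖v₁‖) := by
    refine max_le ?_ (by positivity)
    calc ⟪v - v₁, n⟫ ≤ ‖v - v₁‖ * ‖(n : E)‖ := real_inner_le_norm _ _
      _ ≤ ‖v‖ + ‖v₁‖ := by rw [norm_eq_of_mem_sphere, mul_one]; exact norm_sub_le v v₁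
      _ ≤ (1 + ‖v‖) * (1 + ‖v₁‖) := by nlinarith [norm_nonneg v, norm_nonneg v₁]
  calc ‖lossTerm M f (v, v₁, n)‖ = max ⟪v - v₁, n⟫ 0 * (|M v₁| * |f v|) := by simp [lossTerm]
    _ ≤ (1 + ‖v‖) * (1 + ‖v₁‖) * (|M v₁| * |f v|) := by gcongr
    _ = _ := by ring

variable [FiniteDimensional ℝ E] [MeasurableSpace E] [BorelSpace E]

theorem measurable_lossTerm {M f : E → ℝ} (hM : Measurable M) (hf : Measurable f) :
    Measurable (lossTerm M f) := by
  have hinner : Continuous fun q : E × E × sphere (0 : E) 1 => ⟪q.1 - q.2.1, q.2.2⟫ := by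
    fun_prop
  exact (hinner.measurable.max measurable_const).mul
    ((hM.comp measurable_snd.fst).mul (hf.comp measurable_fst))

theorem integrable_lossTerm (μ : Measure E) [SFinite μ] (σ : Measure (sphere (0 : E) 1))
    [IsFiniteMeasure σ] {M f : E → ℝ} (hM : Measurable M) (hf : Measurable f)
    (hM1 : Integrable (fun v => (1 + ‖v‖) * |M v|) μ)
    (hf1 : Integrable (fun v => (1 + ‖v‖) * |f v|) μ) :
    Integrable (lossTerm M f) (μ.prod (μ.prod σ)) :=
  (hf1.mul_prod (hM1.comp_fst σ)).mono'
    (measurable_lossTerm hM hf).aestronglyMeasurable (ae_of_all _ (norm_lossTerm_le M f))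

theorem measurePreserving_collisionMap (μ : Measure E) [μ.IsAddHaarMeasure]
    {σ : Measure (sphere (0 : E) 1)} [SFinite σ] (hσ : MeasurePreserving Neg.neg σ σ) :
    MeasurePreserving collisionMap (μ.prod (μ.prod σ)) (μ.prod (μ.prod σ)) := by
  let e : E × E × sphere (0 : E) 1 ≃ᵐ sphere (0 : E) 1 × (E × E) :=
    MeasurableEquiv.prodAssoc.symm.trans MeasurableEquiv.prodComm
  have he : MeasurePreserving e (μ.prod (μ.prod σ)) (σ.prod (μ.prod μ)) :=
    Measure.measurePreserving_swap.comp (measurePreserving_prodAssoc μ μ σ).symm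
  have hskew : MeasurePreserving
      (fun x : sphere (0 : E) 1 × (E × E) => (-x.1, collisionReflection x.1 x.2))
      (σ.prod (μ.prod μ)) (σ.prod (μ.prod μ)) :=
    hσ.skew_product continuous_collisionReflection.measurable (ae_of_all _ fun u =>
      (LinearMap.measurePreserving_of_involutive (μ.prod μ)
        (T := (collisionReflection u).toLinearMap) (involutive_collisionReflection u)).map_eq)
  exact he.symm.comp (hskew.comp he)

theorem integrable_and_integral_lossTerm_collisionMap_sub_eq_zero (μ : Measure E)
    [μ.IsAddHaarMeasure] {σ : Measure (sphere (0 : E) 1)} [IsFiniteMeasure σ]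
    (hσ : MeasurePreserving Neg.neg σ σ) {M f : E → ℝ} (hM : Measurable M) (hf : Measurable f)
    (hM1 : Integrable (fun v => (1 + ‖v‖) * |M v|) μ)
    (hf1 : Integrable (fun v => (1 + ‖v‖) * |f v|) μ) :
    Integrable (fun q => lossTerm M f (collisionMap q) - lossTerm M f q) (μ.prod (μ.prod σ)) ∧
      ∫ q, lossTerm M f (collisionMap q) - lossTerm M f q ∂(μ.prod (μ.prod σ)) = 0 :=
  (measurePreserving_collisionMap μ hσ).integrable_and_integral_comp_sub_self
    (integrable_lossTerm μ σ hM hf hM1 hf1)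

end Collision

def sphericalCoords (p : Fin 2 → ℝ) : E3 :=
  !₂[sin (p 0) * cos (p 1), sin (p 0) * sin (p 1), cos (p 0)]

theorem contDiff_sphericalCoords : ContDiff ℝ 1 sphericalCoords := by
  refine (contDiff_piLp 2).2 fun i => ?_
  fin_cases i <;> simp [sphericalCoords] <;> fun_prop

theorem sphere_subset_image_sphericalCoords :
    sphere (0 : E3) 1 ⊆ sphericalCoords '' closedBall 0 4 := by
  intro u hu
  have hsq : u 0 ^ 2 + u 1 ^ 2 + u 2 ^ 2 = 1 := by
    simpa [Fin.sum_univ_three, mem_sphere_zero_iff_norm.1 hu] using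
      (EuclideanSpace.norm_sq_eq u).symm
  obtain ⟨hu2_lower, hu2_upper⟩ : -1 ≤ u 2 ∧ u 2 ≤ 1 :=
    abs_le.1 (by simpa [mem_sphere_zero_iff_norm.1 hu] using PiLp.norm_apply_le u 2)
  set z : ℂ := ⟨u 0, u 1⟩
  have hz : ‖z‖ = sin (arccos (u 2)) := by
    rw [sin_arccos, Complex.norm_def, Complex.normSq_mk]
    congr 1
    linarith
  refine ⟨![arccos (u 2), z.arg], ?_, ?_⟩
  · rw [mem_closedBall_zero_iff, pi_norm_le_iff_of_nonneg (by norm_num), Fin.forall_fin_two]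
    simp only [Matrix.cons_val_zero, Matrix.cons_val_one, Real.norm_eq_abs,
      abs_of_nonneg (arccos_nonneg _)]
    exact ⟨(arccos_le_pi _).trans pi_le_four, (Complex.abs_arg_le_pi z).trans pi_le_four⟩
  · ext i
    fin_cases i
    · simp [sphericalCoords, ← hz, Complex.norm_mul_cos_arg, z]
    · simp [sphericalCoords, ← hz, Complex.norm_mul_sin_arg, z]
    · simp [sphericalCoords, cos_arccos hu2_lower hu2_upper]

theorem hausdorffMeasure_sphere_lt_top : μH[2] (sphere (0 : E3) 1) < ⊤ := by
  obtain ⟨K, hK⟩ := contDiff_sphericalCoords.contDiffOn.exists_lipschitzOnWith one_ne_zero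
    (convex_closedBall (0 : Fin 2 → ℝ) 4) (isCompact_closedBall 0 4)
  have hvol : (μH[2] : Measure (Fin 2 → ℝ)) = volume := by
    simpa using hausdorffMeasure_pi_real (ι := Fin 2)
  calc μH[2] (sphere (0 : E3) 1) ≤ μH[2] (sphericalCoords '' closedBall 0 4) :=
        measure_mono sphere_subset_image_sphericalCoords
    _ ≤ K ^ (2 : ℝ) * μH[2] (closedBall (0 : Fin 2 → ℝ) 4) :=
        hK.hausdorffMeasure_image_le zero_le_two
    _ < ⊤ := by
      rw [hvol]
      exact ENNReal.mul_lt_top (by simp) (isCompact_closedBall 0 4).measure_lt_top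

instance : IsFiniteMeasure (μH[2] : Measure (sphere (0 : E3) 1)) where
  measure_univ_lt_top := by
    rw [← isometry_subtype_coe.hausdorffMeasure_image (Or.inl zero_le_two), Set.image_univ,
      Subtype.range_coe]
    exact hausdorffMeasure_sphere_lt_top

theorem continuous_Mβ (β : ℝ) : Continuous (Mβ β) := by
  unfold Mβ
  fun_prop

theorem integrable_one_add_norm_mul_abs_Mβ {β : ℝ} (hβ : 0 < β) :
    Integrable (fun v : E3 => (1 + ‖v‖) * |Mβ β v|) :=
  ((integrable_one_add_norm_mul_exp_neg_mul_sq_norm volume (half_pos hβ)).const_mul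
    |(β / (2 * π)) ^ ((3 : ℝ) / 2)|).congr (ae_of_all _ fun v => by
      simp only [Mβ, abs_mul, abs_of_pos (exp_pos _)]
      ring)

theorem collKernel_eq_lossTerm_collisionMap_sub (β : ℝ) (f : E3 → ℝ) :
    collKernel β f = fun q => lossTerm (Mβ β) f (collisionMap q) - lossTerm (Mβ β) f q := by
  ext ⟨v, v₁, n⟩
  rw [lossTerm_collisionMap, lossTerm, collKernel]
  ring

/-- Mass conservation for the linear Boltzmann collision operator: if `f` is measurable
with `∫ (1+‖v‖)|f(v)| dv < ∞`, then the collision integrand is integrable on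
`ℝ³ × ℝ³ × S²` (Lebesgue × Lebesgue × surface measure) and its total integral vanishes. -/
theorem collision_operator_zero_mass (β : ℝ) (hβ : 0 < β) (f : E3 → ℝ)
    (hf : Measurable f)
    (hf1 : Integrable (fun v : E3 => (1 + ‖v‖) * |f v|)) :
    Integrable (collKernel β f)
      ((volume : Measure E3).prod
        ((volume : Measure E3).prod (μH[2] : Measure (Metric.sphere (0 : E3) 1)))) ∧
    (∫ q : E3 × E3 × Metric.sphere (0 : E3) 1, collKernel β f q
        ∂((volume : Measure E3).prod
          ((volume : Measure E3).prod (μH[2] : Measure (Metric.sphere (0 : E3) 1))))) = 0 := by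
  rw [collKernel_eq_lossTerm_collisionMap_sub]
  exact integrable_and_integral_lossTerm_collisionMap_sub_eq_zero volume
    (measurePreserving_neg_sphere 1 2) (continuous_Mβ β).measurable hf
    (integrable_one_add_norm_mul_abs_Mβ hβ) hf1
end
end

section
/- Let β > 0. For all x, v ∈ ℝ³, all ε > 0 and all T ≥ 0: ∫_{ℝ³} M_β(w) · vol({y ∈ ℝ³ : ∃ s ∈ [0,T], ‖y + s·w − x − s·v‖ ≤ ε}) dw ≤ ε²·λ(v)·T + (4/3)·π·ε³. -/
/-!
For fixed `w` the set of `y` is a translate of the capsule `tube (w - v) T ε` swept out by a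
closed `ε`-ball moving with velocity `w - v` for time `T`. A reflection carries `w - v` to
`‖w - v‖ e₀`, and the capsule along `e₀` of length `L = T ‖w - v‖` is covered by the solid
cylinder of radius `ε` and length `L` together with the two halves of the `ε`-ball, one of them
moved to the far end of the cylinder. So its volume is at most `π ε² L + (4/3) π ε³`, and
integrating this against `M_β`, a Gaussian of total mass `1`, gives `ε² λ(v) T + (4/3) π ε³`.
-/

open MeasureTheory

noncomputable section

/-- The collision frequency `λ(v) = π ∫ M_β(w) ‖v − w‖ dw`. -/
def lam (β : ℝ) (v : E3) : ℝ := Real.pi * ∫ w : E3, Mβ β w * ‖v - w‖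

open Metric Set Real

section Tube

variable {E : Type*} [NormedAddCommGroup E] [InnerProductSpace ℝ E]

def tube (u : E) (T ε : ℝ) : Set E := {z | ∃ s ∈ Icc (0 : ℝ) T, ‖z + s • u‖ ≤ ε}

lemma tube_smul {c T : ℝ} (hc : 0 ≤ c) (hT : 0 ≤ T) (u : E) (ε : ℝ) :
    tube (c • u) T ε = tube u (T * c) ε := by
  ext z
  constructor
  · rintro ⟨s, ⟨hs0, hsT⟩, h⟩
    exact ⟨s * c, ⟨by positivity, by gcongr⟩, by rwa [← smul_smul]⟩
  · rintro ⟨t, ⟨ht0, htT⟩, h⟩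
    rcases hc.eq_or_lt with rfl | hc
    · obtain rfl : t = 0 := by linarith [mul_zero T]
      exact ⟨0, ⟨le_rfl, hT⟩, by simpa using h⟩
    · refine ⟨t / c, ⟨by positivity, (div_le_iff₀ hc).2 htT⟩, ?_⟩
      rwa [smul_smul, div_mul_cancel₀ _ hc.ne']

lemma preimage_tube (R : E ≃ₗᵢ[ℝ] E) (u : E) (T ε : ℝ) :
    R ⁻¹' tube (R u) T ε = tube u T ε := by
  ext z
  simp only [tube, mem_preimage, mem_ofPred_eq, ← map_smul, ← map_add, LinearIsometryEquiv.norm_map]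

lemma preimage_add_neg_tube_sub (x v w : E) (T ε : ℝ) :
    (· + -x) ⁻¹' tube (w - v) T ε = {y | ∃ s ∈ Icc (0 : ℝ) T, ‖y + s • w - x - s • v‖ ≤ ε} := by
  ext y
  simp only [tube, mem_preimage, mem_ofPred_eq, smul_sub]
  congr! 5
  abel

variable [FiniteDimensional ℝ E] [MeasurableSpace E] [BorelSpace E]

lemma volume_tube_eq_of_norm_eq {u u' : E} (h : ‖u‖ = ‖u'‖) (T ε : ℝ) :
    volume (tube u T ε) = volume (tube u' T ε) := by
  let R := Submodule.reflection (ℝ ∙ (u - u'))ᗮ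
  rw [← Submodule.reflection_sub h, ← preimage_tube R,
    R.measurePreserving.measure_preimage_emb R.toHomeomorph.measurableEmbedding]

end Tube

local notation "e₀" => EuclideanSpace.single (0 : Fin 3) (1 : ℝ)

lemma norm_add_smul_single_zero_sq (z : E3) (t : ℝ) :
    ‖z + t • e₀‖ ^ 2 = (z 0 + t) ^ 2 + z 1 ^ 2 + z 2 ^ 2 := by
  simp [EuclideanSpace.norm_sq_eq, Fin.sum_univ_three]

lemma norm_sq_eq_coords (z : E3) : ‖z‖ ^ 2 = z 0 ^ 2 + z 1 ^ 2 + z 2 ^ 2 := by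
  simpa using norm_add_smul_single_zero_sq z 0

def solidCylinder (L ε : ℝ) : Set E3 := {z | z 0 ∈ Icc (-L) 0 ∧ z 1 ^ 2 + z 2 ^ 2 ≤ ε ^ 2}

lemma measurePreserving_fst_tail :
    MeasurePreserving (fun z : E3 => (z 0, WithLp.toLp 2 fun i : Fin 2 => z i.succ))
      volume (volume.prod volume) :=
  ((MeasurePreserving.id volume).prod (PiLp.volume_preserving_toLp (Fin 2))).comp <|
    (measurePreserving_piFinSuccAbove (fun _ : Fin 3 => (volume : Measure ℝ)) 0).comp
      (PiLp.volume_preserving_ofLp (Fin 3))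

lemma volume_solidCylinder {L ε : ℝ} (hε : 0 ≤ ε) :
    volume (solidCylinder L ε) = ENNReal.ofReal L * ENNReal.ofReal (π * ε ^ 2) := by
  have hcyl : solidCylinder L ε = (fun z : E3 => (z 0, WithLp.toLp 2 fun i : Fin 2 => z i.succ)) ⁻¹'
      (Icc (-L) 0 ×ˢ closedBall 0 ε) := by
    ext z
    simp only [solidCylinder, mem_Icc, mem_ofPred_eq, mem_preimage, mem_prod,
      mem_closedBall_zero_iff, ← sq_le_sq₀ (norm_nonneg _) hε, EuclideanSpace.norm_sq_eq,
      norm_eq_abs, sq_abs, Fin.sum_univ_two, Fin.succ_zero_eq_one, Fin.succ_one_eq_two]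
  rw [hcyl, measurePreserving_fst_tail.measure_preimage
      (measurableSet_Icc.prod measurableSet_closedBall).nullMeasurableSet,
    Measure.prod_prod, Real.volume_Icc, EuclideanSpace.volume_closedBall_fin_two,
    ← ENNReal.ofReal_pow hε, ← ENNReal.ofReal_mul (by positivity)]
  simp [mul_comm]

lemma tube_single_zero_subset {L ε : ℝ} (hε : 0 ≤ ε) :
    tube e₀ L ε ⊆ solidCylinder L ε ∪ (closedBall 0 ε ∩ {z | 0 < z 0}) ∪
      (· + L • e₀) ⁻¹' (closedBall 0 ε ∩ {z | z 0 ≤ 0}) := by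
  rintro z ⟨t, ⟨ht0, htL⟩, hz⟩
  rw [← sq_le_sq₀ (norm_nonneg _) hε, norm_add_smul_single_zero_sq] at hz
  have mem_ball_of {t' : ℝ} (h : (z 0 + t') ^ 2 ≤ (z 0 + t) ^ 2) :
      z + t' • e₀ ∈ closedBall 0 ε := by
    rw [mem_closedBall_zero_iff, ← sq_le_sq₀ (norm_nonneg _) hε, norm_add_smul_single_zero_sq]
    linarith
  rcases lt_or_ge 0 (z 0) with hpos | hnonpos
  · refine Or.inl (Or.inr ⟨by simpa using mem_ball_of (t' := 0) (by nlinarith), hpos⟩)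
  rcases le_or_gt (-L) (z 0) with hL | hL
  · exact Or.inl (Or.inl ⟨⟨hL, hnonpos⟩, by nlinarith⟩)
  · exact Or.inr ⟨mem_ball_of (by nlinarith), by
      simp only [mem_ofPred_eq, PiLp.add_apply, PiLp.smul_apply, PiLp.single_eq_same,
        smul_eq_mul, mul_one]
      linarith⟩

lemma volume_tube_single_zero_le {L ε : ℝ} (hL : 0 ≤ L) (hε : 0 ≤ ε) :
    volume (tube e₀ L ε) ≤ ENNReal.ofReal (π * ε ^ 2 * L + 4 / 3 * π * ε ^ 3) := by
  set B : Set E3 := closedBall 0 ε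
  have hhalves : volume (B ∩ {z | 0 < z 0}) + volume (B ∩ {z | z 0 ≤ 0}) = volume B := by
    have hH : MeasurableSet {z : E3 | 0 < z 0} := measurableSet_lt measurable_const (by fun_prop)
    simpa [sdiff_eq, compl_ofPred] using measure_inter_add_sdiff B hH
  calc volume (tube e₀ L ε)
      ≤ volume (solidCylinder L ε) + volume (B ∩ {z | 0 < z 0}) +
          volume ((· + L • e₀) ⁻¹' (B ∩ {z | z 0 ≤ 0})) :=
        (measure_mono (tube_single_zero_subset hε)).trans <|
          (measure_union_le _ _).trans (add_le_add_left (measure_union_le _ _) _)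
    _ = volume (solidCylinder L ε) + volume B := by
        rw [measure_preimage_add_right, add_assoc, hhalves]
    _ = ENNReal.ofReal (π * ε ^ 2 * L + 4 / 3 * π * ε ^ 3) := by
        rw [volume_solidCylinder hε, EuclideanSpace.volume_closedBall_fin_three,
          ← ENNReal.ofReal_pow hε, ← ENNReal.ofReal_mul hL, ← ENNReal.ofReal_mul (by positivity),
          ← ENNReal.ofReal_add (by positivity) (by positivity)]
        congr 1
        ring

lemma volume_tube_le {T ε : ℝ} (hT : 0 ≤ T) (hε : 0 ≤ ε) (u : E3) :
    volume (tube u T ε) ≤ ENNReal.ofReal (π * ε ^ 2 * T * ‖u‖ + 4 / 3 * π * ε ^ 3) := by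
  rw [volume_tube_eq_of_norm_eq (u' := ‖u‖ • e₀) (by simp [norm_smul]) T ε,
    tube_smul (norm_nonneg u) hT, mul_assoc _ T]
  exact volume_tube_single_zero_le (by positivity) hε

lemma integrable_norm_pow_mul_exp_neg_mul_sq {E : Type*} [NormedAddCommGroup E] [NormedSpace ℝ E]
    [Nontrivial E] [FiniteDimensional ℝ E] [MeasurableSpace E] [BorelSpace E]
    (μ : Measure E) [μ.IsAddHaarMeasure] {b : ℝ} (hb : 0 < b) (k : ℕ) :
    Integrable (fun w : E => ‖w‖ ^ k * exp (-b * ‖w‖ ^ 2)) μ := by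
  refine (integrable_fun_norm_addHaar μ (f := fun y => y ^ k * exp (-b * y ^ 2))).2 ?_
  refine (integrableOn_rpow_mul_exp_neg_mul_sq hb (s := (Module.finrank ℝ E - 1 + k : ℕ))
    (neg_one_lt_zero.trans_le (Nat.cast_nonneg _))).congr_fun (fun y _ => ?_) measurableSet_Ioi
  simp only [rpow_natCast, smul_eq_mul, pow_add, mul_assoc]

lemma Mβ_nonneg {β : ℝ} (hβ : 0 ≤ β) (v : E3) : 0 ≤ Mβ β v := by
  unfold Mβ
  positivity

lemma integrable_Mβ {β : ℝ} (hβ : 0 < β) : Integrable (Mβ β) := by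
  unfold Mβ
  simpa only [pow_zero, one_mul] using
    (integrable_norm_pow_mul_exp_neg_mul_sq (volume : Measure E3) (half_pos hβ) 0).const_mul
      ((β / (2 * π)) ^ ((3 : ℝ) / 2))

lemma integrable_Mβ_mul_norm_sub {β : ℝ} (hβ : 0 < β) (v : E3) :
    Integrable (fun w => Mβ β w * ‖v - w‖) := by
  have hgauss (k : ℕ) :=
    integrable_norm_pow_mul_exp_neg_mul_sq (volume : Measure E3) (half_pos hβ) k
  have hdom := ((hgauss 1).add ((hgauss 0).const_mul ‖v‖)).const_mul ((β / (2 * π)) ^ ((3 : ℝ) / 2))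
  refine hdom.mono' (by unfold Mβ; fun_prop) (ae_of_all _ fun w => ?_)
  rw [norm_of_nonneg (mul_nonneg (Mβ_nonneg hβ.le w) (norm_nonneg _)), Mβ]
  simp only [Pi.add_apply, pow_one, pow_zero, one_mul]
  calc _ ≤ (β / (2 * π)) ^ ((3 : ℝ) / 2) * exp (-(β / 2) * ‖w‖ ^ 2) * (‖v‖ + ‖w‖) := by
        gcongr; exact norm_sub_le v w
    _ = _ := by ring

lemma integral_Mβ {β : ℝ} (hβ : 0 < β) : ∫ w, Mβ β w = 1 := by
  simp only [Mβ, integral_const_mul]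
  rw [GaussianFourier.integral_rexp_neg_mul_sq_norm (half_pos hβ), finrank_euclideanSpace_fin,
    Nat.cast_ofNat, ← mul_rpow (by positivity) (by positivity)]
  field_simp
  exact one_rpow _

lemma integrable_Mβ_mul_norm_sub_add {β : ℝ} (hβ : 0 < β) (v : E3) (a b : ℝ) :
    Integrable (fun w => Mβ β w * (a * ‖v - w‖ + b)) := by
  refine (((integrable_Mβ_mul_norm_sub hβ v).const_mul a).add
    ((integrable_Mβ hβ).const_mul b)).congr (ae_of_all _ fun w => ?_)
  simp only [Pi.add_apply]
  ring

lemma integral_Mβ_mul_norm_sub_add {β : ℝ} (hβ : 0 < β) (v : E3) (a b : ℝ) :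
    ∫ w, Mβ β w * (a * ‖v - w‖ + b) = a * (∫ w, Mβ β w * ‖v - w‖) + b := by
  simp only [mul_add, mul_left_comm _ a, mul_comm _ b]
  rw [integral_add ((integrable_Mβ_mul_norm_sub hβ v).const_mul a) ((integrable_Mβ hβ).const_mul b),
    integral_const_mul, integral_const_mul, integral_Mβ hβ, mul_one]

/-- Averaging the volume of the collision tube over the Maxwellian obstacle velocity:
`∫ M_β(w) vol({y : ∃ s ∈ [0,T], ‖y + s w − x − s v‖ ≤ ε}) dw ≤ ε² λ(v) T + (4/3) π ε³`. -/
theorem averaged_tube_volume_bound (β : ℝ) (hβ : 0 < β) (x v : E3) (ε T : ℝ)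
    (hε : 0 < ε) (hT : 0 ≤ T) :
    (∫⁻ w : E3, ENNReal.ofReal (Mβ β w) *
        volume {y : E3 | ∃ s ∈ Set.Icc (0 : ℝ) T, ‖y + s • w - x - s • v‖ ≤ ε}) ≤
      ENNReal.ofReal (ε ^ 2 * lam β v * T + (4 / 3) * Real.pi * ε ^ 3) := by
  calc (∫⁻ w : E3, ENNReal.ofReal (Mβ β w) *
        volume {y : E3 | ∃ s ∈ Set.Icc (0 : ℝ) T, ‖y + s • w - x - s • v‖ ≤ ε})
      ≤ ∫⁻ w, ENNReal.ofReal (Mβ β w * (π * ε ^ 2 * T * ‖v - w‖ + 4 / 3 * π * ε ^ 3)) := by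
        refine lintegral_mono fun w => ?_
        rw [ENNReal.ofReal_mul (Mβ_nonneg hβ.le w), ← preimage_add_neg_tube_sub,
          measure_preimage_add_right, norm_sub_rev]
        gcongr
        exact volume_tube_le hT hε.le (w - v)
    _ = ENNReal.ofReal (∫ w, Mβ β w * (π * ε ^ 2 * T * ‖v - w‖ + 4 / 3 * π * ε ^ 3)) :=
        (ofReal_integral_eq_lintegral_ofReal (integrable_Mβ_mul_norm_sub_add hβ v _ _)
          (ae_of_all _ fun w => mul_nonneg (Mβ_nonneg hβ.le w) (by positivity))).symm
    _ = ENNReal.ofReal (ε ^ 2 * lam β v * T + (4 / 3) * Real.pi * ε ^ 3) := by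
        rw [integral_Mβ_mul_norm_sub_add hβ, lam]
        congr 1
        ring
end
end
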